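/- Let k ≥ 2 be an integer and G a k-connected (K₂ ∪ kK₁)-free graph that is not hamiltonian, and let C be a longest cycle of G. Then every connected component of G − V(C) consists of a single vertex. -/

import Mathlib

open SimpleGraph

variable {V : Type*}

/-- The number of connected components after deleting the vertex set `S`. -/
noncomputable def omegaDel [Fintype V] (G : SimpleGraph V) (S : Finset V) : ℕ :=
  Nat.card ((G.induce ((S : Set V)ᶜ)).ConnectedComponent)

/-- `G` is `m`-connected. -/
def IsKConn [Fintype V] (G : SimpleGraph V) (m : ℕ) : Prop :=
  m < Fintype.card V ∧ ∀ S : Finset V, S.card < m → (G.induce ((S : Set V)ᶜ)).Connected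

/-- The independence number of `G`. -/
noncomputable def alphaNum [Fintype V] (G : SimpleGraph V) : ℕ :=
  sSup {n | ∃ s : Finset V, (∀ a ∈ s, ∀ b ∈ s, ¬ G.Adj a b) ∧ s.card = n}

/-- The minimum degree of `G`. -/
noncomputable def minDeg [Fintype V] (G : SimpleGraph V) : ℕ :=
  sInf {d | ∃ v : V, (G.neighborSet v).ncard = d}

/-- The graph `K₂ ∪ kK₁`. -/
def K2kK1 (k : ℕ) : SimpleGraph (Fin 2 ⊕ Fin k) :=
  SimpleGraph.fromRel fun a b => a.isLeft ∧ b.isLeft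

/-- `G` contains no induced copy of `H`. -/
def IndFree {W : Type*} (H : SimpleGraph W) (G : SimpleGraph V) : Prop :=
  IsEmpty (H ↪g G)

/-- `G` has a hamiltonian cycle. -/
def Ham [DecidableEq V] (G : SimpleGraph V) : Prop :=
  ∃ (a : V) (p : G.Walk a a), p.IsHamiltonianCycle

/-- `G` is hamiltonian-connected. -/
def HamConn [DecidableEq V] (G : SimpleGraph V) : Prop :=
  ∀ a b : V, a ≠ b → ∃ p : G.Walk a b, p.IsHamiltonian

/-- The Petersen graph. -/
def petersen : SimpleGraph (ZMod 5 ⊕ ZMod 5) :=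
  SimpleGraph.fromRel fun a b =>
    match a, b with
    | Sum.inl i, Sum.inl j => i = j + 1
    | Sum.inr i, Sum.inr j => i = j + 2
    | Sum.inl i, Sum.inr j => i = j
    | _, _ => False

/-! Let `H` be a component of `G - C` and call `i` an attachment of `H` if `f i` has a neighbour
in `H`. Since `C` is longest, it cannot be rerouted through `H`: the successor `f (i + 1)` of an
attachment has no neighbour in `H`, and the successors of two distinct attachments are
nonadjacent (else `C` could be cut open at both attachments and closed up through `H` and the
chord between the successors). The attachments separate `H` from the rest of `C`, which is
nonempty by the first observation, so `k`-connectivity gives at least `k` of them. If `H` had an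
edge `xu`, then `x`, `u` and `k` of these successors would induce `K₂ ∪ kK₁`. -/

section Cycles

variable {G : SimpleGraph V}

theorem SimpleGraph.exists_isCycle_of_isChain {l : List V} (hne : l ≠ []) (hnd : l.Nodup)
    (hc : l.IsChain G.Adj) (hcl : G.Adj (l.getLast hne) (l.head hne)) (h3 : 3 ≤ l.length) :
    ∃ (v : V) (c : G.Walk v v), c.IsCycle ∧ c.length = l.length := by
  refine ⟨_, .cons hcl (.ofSupport l hne hc), ?_, by simp; omega⟩
  rw [Walk.isCycle_iff_isPath_tail_and_le_length]
  simp [Walk.isPath_def, hnd]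
  omega

theorem SimpleGraph.Reachable.exists_isPath_of_induce {S : Set V} {a b : S}
    (h : (G.induce S).Reachable a b) :
    ∃ q : G.Walk a b, q.IsPath ∧ ∀ v ∈ q.support, v ∈ S := by
  classical
  obtain ⟨p⟩ := h
  have hS : ∀ v ∈ (p.toPath.1.map (Embedding.induce S).toHom).support, v ∈ S := by
    simp only [Walk.support_map, List.mem_map]
    rintro _ ⟨v, -, rfl⟩
    exact v.2
  exact ⟨_, p.toPath.2.map Subtype.val_injective, hS⟩

theorem SimpleGraph.Walk.head?_support {a b : V} (q : G.Walk a b) : q.support.head? = some a := by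
  cases q <;> rfl

theorem SimpleGraph.Walk.getLast?_support {a b : V} (q : G.Walk a b) :
    q.support.getLast? = some b := by
  rw [List.getLast?_eq_some_getLast q.support_ne_nil, Walk.getLast_support]

end Cycles

section Components

variable {G : SimpleGraph V}

theorem SimpleGraph.ConnectedComponent.exists_adj_of_ne (C : G.ConnectedComponent) {x y : V}
    (hx : x ∈ C.supp) (hy : y ∈ C.supp) (hxy : x ≠ y) : ∃ u ∈ C.supp, G.Adj x u := by
  obtain ⟨p⟩ := C.reachable_of_mem_supp hx hy
  cases p with
  | nil => exact absurd rfl hxy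
  | cons h _ => exact ⟨_, C.mem_supp_of_adj_mem_supp hx h, h⟩

theorem SimpleGraph.ConnectedComponent.subset_of_preconnected_induce_compl {S T : Set V}
    (H : (G.induce Sᶜ).ConnectedComponent) (hT : ∀ v ∈ H.supp, ∀ s ∈ S, G.Adj v s → s ∈ T)
    (hconn : (G.induce Tᶜ).Preconnected) {x : ↥Sᶜ} (hx : x ∈ H.supp) (hxT : ↑x ∉ T) :
    S ⊆ T := by
  intro w hwS
  by_contra hwT
  obtain ⟨p⟩ := hconn ⟨x, hxT⟩ ⟨w, hwT⟩
  obtain ⟨d, -, ⟨_, hd⟩, hd'⟩ :=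
    p.exists_boundary_dart {u : ↥Tᶜ | ∃ h : (u : V) ∈ Sᶜ, (⟨u, h⟩ : ↥Sᶜ) ∈ H.supp} ⟨x.2, hx⟩
      fun ⟨h, _⟩ => h hwS
  by_cases hS : ↑d.snd ∈ S
  · exact d.snd.2 (hT _ hd _ hS d.adj)
  · exact hd' ⟨hS, H.mem_supp_of_adj_mem_supp hd d.adj⟩

end Components

section Arcs

variable {α : Type*} {n : ℕ}

def arc (f : ZMod n → α) (i : ZMod n) (m : ℕ) : List α :=
  (List.range m).map fun t : ℕ => f (i + t)

variable {f : ZMod n → α} {i : ZMod n} {m : ℕ}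

@[simp]
theorem length_arc : (arc f i m).length = m := by
  simp [arc]

theorem arc_add (d e : ℕ) : arc f i (d + e) = arc f i d ++ arc f (i + d) e := by
  simp [arc, List.range_add, add_assoc]

@[simp]
theorem head?_arc : (arc f i (m + 1)).head? = some (f i) := by
  simp [arc, List.head?_range]

@[simp]
theorem getLast?_arc : (arc f i (m + 1)).getLast? = some (f (i + m)) := by
  simp [arc, List.getLast?_range]

theorem mem_range_of_mem_arc {v : α} (hv : v ∈ arc f i m) : v ∈ Set.range f := by
  obtain ⟨t, -, rfl⟩ := List.mem_map.mp hv
  exact ⟨_, rfl⟩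

theorem nodup_arc (hf : Function.Injective f) (hm : m ≤ n) : (arc f i m).Nodup := by
  refine List.nodup_range.map_on fun s hs t ht hst => ?_
  have hcast : ((s : ℕ) : ZMod n) = t := add_left_cancel (hf hst)
  rwa [ZMod.natCast_eq_natCast_iff', Nat.mod_eq_of_lt (by simp at hs; omega),
    Nat.mod_eq_of_lt (by simp at ht; omega)] at hcast

theorem isChain_arc {r : α → α → Prop} (hr : ∀ i, r (f i) (f (i + 1))) :
    (arc f i m).IsChain r := by
  rw [arc, List.isChain_map]
  cases m with
  | zero => simp
  | succ m =>
    exact (List.isChain_range_succ _ m).mpr fun t _ => by simpa [add_assoc] using hr (i + t)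

end Arcs

section LongestCycle

variable {G : SimpleGraph V} {n : ℕ} {f : ZMod n → V}

structure IsLongestCycle (G : SimpleGraph V) (f : ZMod n → V) : Prop where
  injective : Function.Injective f
  adj : ∀ i, G.Adj (f i) (f (i + 1))
  length_le : ∀ (v : V) (c : G.Walk v v), c.IsCycle → c.length ≤ n

namespace IsLongestCycle

theorem length_le_of_isChain (hC : IsLongestCycle G f) (hn : 3 ≤ n) {l : List V}
    (hnd : l.Nodup) (hc : l.IsChain G.Adj) (hcl : ∀ x ∈ l.getLast?, ∀ y ∈ l.head?, G.Adj x y) :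
    l.length ≤ n := by
  by_contra! hlt
  have hne : l ≠ [] := List.ne_nil_of_length_pos (by omega)
  obtain ⟨v, c, hcyc, hlen⟩ := exists_isCycle_of_isChain hne hnd hc
    (hcl _ (List.getLast?_eq_some_getLast hne) _ (List.head?_eq_some_head hne)) (by omega)
  exact hlt.not_ge (hlen ▸ hC.length_le v c hcyc)

theorem not_adj_succ_of_path (hC : IsLongestCycle G f) (hn : 3 ≤ n) {a b : V}
    {q : G.Walk a b} (hq : q.IsPath) (hoff : ∀ v ∈ q.support, v ∉ Set.range f) {i : ZMod n}
    (hia : G.Adj (f i) a) : ¬ G.Adj b (f (i + 1)) := by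
  intro hbi
  obtain ⟨m, rfl⟩ : ∃ m, n = m + 1 := ⟨n - 1, by omega⟩
  have hlast : i + 1 + (m : ZMod (m + 1)) = i := by
    have := ZMod.natCast_self (m + 1)
    push_cast at this
    linear_combination this
  have hlen := hC.length_le_of_isChain hn (l := arc f (i + 1) (m + 1) ++ q.support) ?_ ?_ ?_
  · simp at hlen
  · refine List.nodup_append.mpr ⟨nodup_arc hC.injective le_rfl, hq.support_nodup, ?_⟩
    rintro v hv _ hv' rfl
    exact hoff v hv' (mem_range_of_mem_arc hv)
  · exact (isChain_arc hC.adj).append q.isChain_adj_support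
      (by simp [hlast, hia, Walk.head?_support])
  · simp [Walk.getLast?_support, Walk.head?_support, hbi]

theorem not_adj_succ_succ_of_path (hC : IsLongestCycle G f) (hn : 3 ≤ n) {a b : V}
    {q : G.Walk a b} (hq : q.IsPath) (hoff : ∀ v ∈ q.support, v ∉ Set.range f) {i j : ZMod n}
    (hij : i ≠ j) (hia : G.Adj (f i) a) (hbj : G.Adj b (f j)) :
    ¬ G.Adj (f (i + 1)) (f (j + 1)) := by
  intro hcross
  have : NeZero n := ⟨by omega⟩
  obtain ⟨s, hs⟩ : ∃ s, (i - j).val = s + 1 :=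
    Nat.exists_eq_succ_of_ne_zero (by simpa [ZMod.val_eq_zero, sub_eq_zero] using hij)
  obtain ⟨e, he⟩ : ∃ e, n = s + 1 + (e + 1) := ⟨n - s - 2, by have := ZMod.val_lt (i - j); omega⟩
  have hsij : ((s + 1 : ℕ) : ZMod n) = i - j := by rw [← hs, ZMod.natCast_zmod_val]
  have hn0 : ((s + 1 + (e + 1) : ℕ) : ZMod n) = 0 := he ▸ ZMod.natCast_self n
  push_cast at hsij hn0
  have hA : j + 1 + (s : ZMod n) = i := by linear_combination hsij
  have hB : i + 1 + (e : ZMod n) = j := by linear_combination hn0 - hsij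
  have hAB : (arc f (j + 1) (s + 1) ++ arc f (i + 1) (e + 1)).Nodup := by
    have := nodup_arc (i := j + 1) hC.injective he.ge
    rw [arc_add] at this
    convert this using 3
    push_cast
    linear_combination -hsij
  -- the cycle `f (j + 1) … f i`, then `q`, then `f j … f (i + 1)` backwards
  have hlen := hC.length_le_of_isChain hn
    (l := arc f (j + 1) (s + 1) ++ (q.support ++ (arc f (i + 1) (e + 1)).reverse)) ?_ ?_ ?_
  · simp at hlen
    omega
  · obtain ⟨hAnd, hBnd, hABne⟩ := List.nodup_append.mp hAB
    have hoff' : ∀ {c : ZMod n} {m : ℕ}, ∀ x ∈ arc f c m, ∀ y ∈ q.support, x ≠ y := by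
      rintro c m x hx _ hy rfl
      exact hoff x hy (mem_range_of_mem_arc hx)
    refine List.nodup_append.mpr ⟨hAnd, List.nodup_append.mpr
      ⟨hq.support_nodup, List.nodup_reverse.mpr hBnd, ?_⟩, ?_⟩
    · intro x hx y hy
      exact (hoff' y (List.mem_reverse.mp hy) x hx).symm
    · intro x hx y hy
      rcases List.mem_append.mp hy with hy | hy
      · exact hoff' x hx y hy
      · exact hABne x hx y (List.mem_reverse.mp hy)
  · refine (isChain_arc hC.adj).append (q.isChain_adj_support.append
      (List.isChain_reverse.mpr (isChain_arc fun k => (hC.adj k).symm)) ?_) ?_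
    · simp [Walk.getLast?_support, hB, hbj]
    · simp [Walk.head?_support, hA, hia]
  · simp [Walk.getLast?_support, Walk.head?_support, hcross]

end IsLongestCycle

end LongestCycle

theorem not_indFree_K2kK1 {G : SimpleGraph V} {k : ℕ} {a b : V} (hab : G.Adj a b) {W : Finset V}
    (hk : k ≤ W.card) (hW : G.IsIndepSet W) (ha : a ∉ W) (hb : b ∉ W)
    (haW : ∀ w ∈ W, ¬ G.Adj a w) (hbW : ∀ w ∈ W, ¬ G.Adj b w) : ¬ IndFree (K2kK1 k) G := by
  obtain ⟨e⟩ : Nonempty (Fin k ↪ W) := Function.Embedding.nonempty_of_card_le (by simpa using hk)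
  have hea : ∀ t, ¬ G.Adj a (e t) ∧ ¬ G.Adj b (e t) := fun t => ⟨haW _ (e t).2, hbW _ (e t).2⟩
  have hee : ∀ s t, ¬ G.Adj (e s) (e t) := fun s t h => hW (e s).2 (e t).2 h.ne h
  have hne : ∀ t, a ≠ e t ∧ b ≠ e t := fun t =>
    ⟨fun h => ha (h ▸ (e t).2), fun h => hb (h ▸ (e t).2)⟩
  let φ : Fin 2 ⊕ Fin k → V := Sum.elim ![a, b] fun t => e t
  have hφ : Function.Injective φ := by
    rintro (p | p) (q | q) h <;> simp only [φ, Sum.elim_inl, Sum.elim_inr] at h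
    · fin_cases p <;> fin_cases q <;> simp_all [hab.ne, hab.ne.symm]
    · fin_cases p <;> simp_all
    · fin_cases q <;> simp_all [eq_comm]
    · exact congrArg Sum.inr (e.injective (Subtype.ext h))
  have hadj : ∀ p q, G.Adj (φ p) (φ q) ↔ (K2kK1 k).Adj p q := by
    simp [Sum.forall, Fin.forall_fin_two, φ, K2kK1, hab, hab.symm, hea, hee, G.adj_comm _ a,
      G.adj_comm _ b]
  exact fun h => h.false ⟨⟨φ, hφ⟩, hadj _ _⟩

section Attachments

variable {G : SimpleGraph V} {n : ℕ} [NeZero n] {f : ZMod n → V}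
  {H : (G.induce (Set.range f)ᶜ).ConnectedComponent}

open Classical in
noncomputable def attachments (G : SimpleGraph V) (f : ZMod n → V)
    (H : (G.induce (Set.range f)ᶜ).ConnectedComponent) : Finset (ZMod n) :=
  Finset.univ.filter fun i => ∃ v ∈ H.supp, G.Adj (f i) v

theorem mem_attachments {i : ZMod n} : i ∈ attachments G f H ↔ ∃ v ∈ H.supp, G.Adj (f i) v := by
  simp [attachments]

namespace IsLongestCycle

theorem not_adj_succ_of_mem_attachments (hC : IsLongestCycle G f) (hn : 3 ≤ n) {i : ZMod n}
    (hi : i ∈ attachments G f H) {w : ↥(Set.range f)ᶜ} (hw : w ∈ H.supp) :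
    ¬ G.Adj (f (i + 1)) w := by
  obtain ⟨v, hv, hiv⟩ := mem_attachments.mp hi
  obtain ⟨q, hq, hqS⟩ := (H.reachable_of_mem_supp hv hw).exists_isPath_of_induce
  exact fun h => hC.not_adj_succ_of_path hn hq hqS hiv h.symm

theorem not_adj_succ_succ_of_mem_attachments (hC : IsLongestCycle G f) (hn : 3 ≤ n)
    {i j : ZMod n} (hi : i ∈ attachments G f H) (hj : j ∈ attachments G f H) (hij : i ≠ j) :
    ¬ G.Adj (f (i + 1)) (f (j + 1)) := by
  obtain ⟨v, hv, hiv⟩ := mem_attachments.mp hi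
  obtain ⟨w, hw, hjw⟩ := mem_attachments.mp hj
  obtain ⟨q, hq, hqS⟩ := (H.reachable_of_mem_supp hv hw).exists_isPath_of_induce
  exact hC.not_adj_succ_succ_of_path hn hq hqS hij hiv hjw.symm

theorem le_card_attachments [Fintype V] (hC : IsLongestCycle G f) (hn : 3 ≤ n) {k : ℕ}
    (hconn : IsKConn G k) (H : (G.induce (Set.range f)ᶜ).ConnectedComponent) :
    k ≤ (attachments G f H).card := by
  classical
  by_contra! hlt
  obtain ⟨x, hx⟩ := H.nonempty_supp
  have hsub := H.subset_of_preconnected_induce_compl (T := ↑((attachments G f H).image f)) ?_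
    (hconn.2 _ (Finset.card_image_le.trans_lt hlt)).preconnected hx ?_
  · -- every vertex of the cycle would be an attachment, including two consecutive ones
    have hall : ∀ i, i ∈ attachments G f H := fun i => by
      obtain ⟨j, hj, hji⟩ := Finset.mem_image.mp (hsub ⟨i, rfl⟩)
      exact hC.injective hji ▸ hj
    obtain ⟨v, hv, h1v⟩ := mem_attachments.mp (hall 1)
    exact hC.not_adj_succ_of_mem_attachments hn (hall 0) hv (by simpa using h1v)
  · rintro v hv _ ⟨i, rfl⟩ hvi
    exact Finset.mem_image_of_mem f (mem_attachments.mpr ⟨v, hv, hvi.symm⟩)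
  · intro hxT
    obtain ⟨i, -, hi⟩ := Finset.mem_image.mp hxT
    exact x.2 ⟨i, hi⟩

end IsLongestCycle

end Attachments

theorem stmt_11_general {V : Type*} [Fintype V] (k : ℕ)
    (G : SimpleGraph V) (hconn : IsKConn G k) (hfree : IndFree (K2kK1 k) G)
    (n : ℕ) (hn : 3 ≤ n)
    (f : ZMod n → V) (hinj : Function.Injective f)
    (hadj : ∀ i : ZMod n, G.Adj (f i) (f (i + 1)))
    (hlong : ∀ (v : V) (c : G.Walk v v), c.IsCycle → c.length ≤ n)
    (H : (G.induce (Set.range f)ᶜ).ConnectedComponent) :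
    H.supp.Subsingleton := by
  classical
  have : NeZero n := ⟨by omega⟩
  have hC : IsLongestCycle G f := ⟨hinj, hadj, hlong⟩
  intro x hx y hy
  by_contra hxy
  obtain ⟨u, hu, hxu⟩ := H.exists_adj_of_ne hx hy hxy
  let W := (attachments G f H).image fun i => f (i + 1)
  have hW : W.card = (attachments G f H).card :=
    Finset.card_image_of_injective _ (hinj.comp (add_left_injective 1))
  have hWoff : ∀ v : ↥(Set.range f)ᶜ, ↑v ∉ W := fun v hv => by
    obtain ⟨i, -, hi⟩ := Finset.mem_image.mp hv
    exact v.2 ⟨_, hi⟩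
  have hWH : ∀ v ∈ H.supp, ∀ w ∈ W, ¬ G.Adj (↑v) w := by
    rintro v hv _ hw
    obtain ⟨i, hi, rfl⟩ := Finset.mem_image.mp hw
    exact fun h => hC.not_adj_succ_of_mem_attachments hn hi hv h.symm
  have hWind : G.IsIndepSet W := by
    rintro _ hs _ ht hst
    obtain ⟨i, hi, rfl⟩ := Finset.mem_image.mp hs
    obtain ⟨j, hj, rfl⟩ := Finset.mem_image.mp ht
    exact hC.not_adj_succ_succ_of_mem_attachments hn hi hj fun h => hst (h ▸ rfl)
  exact not_indFree_K2kK1 (G := G) (a := x) (b := u) hxu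
    ((hC.le_card_attachments hn hconn H).trans hW.ge) hWind (hWoff x) (hWoff u) (hWH x hx)
    (hWH u hu) hfree

/-- In a non-hamiltonian `k`-connected `(K₂ ∪ kK₁)`-free graph, every component of
`G - C` for a longest cycle `C` is a single vertex. -/
theorem stmt_11 {V : Type*} [Fintype V] [DecidableEq V] (k : ℕ) (hk : 2 ≤ k)
    (G : SimpleGraph V) (hconn : IsKConn G k) (hfree : IndFree (K2kK1 k) G)
    (hnh : ¬ Ham G) (n : ℕ) (hn : 3 ≤ n)
    (f : ZMod n → V) (hinj : Function.Injective f)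
    (hadj : ∀ i : ZMod n, G.Adj (f i) (f (i + 1)))
    (hlong : ∀ (v : V) (c : G.Walk v v), c.IsCycle → c.length ≤ n)
    (H : (G.induce (Set.range f)ᶜ).ConnectedComponent) :
    H.supp.Subsingleton :=
  stmt_11_general k G hconn hfree n hn f hinj hadj hlong H
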